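/- There is an absolute constant C such that for every integer q ≥ 3, every real x with 2 ≤ x ≤ q, every positive integer k with x^k ≤ q / log q, and every complex-valued function a on the primes: Σ_{χ ∈ X_q} | Σ_{p ≤ x, p prime} a(p) χ(p) p^{-1/2} |^{2k} ≤ C · φ(q) · k! · ( Σ_{p ≤ x, p prime} |a(p)|^2 / p )^k. -/

import Mathlib

open scoped BigOperators Classical
open Complex

noncomputable section

/-- The finset of primes `p ≤ x`. -/
def primesLE (x : ℝ) : Finset ℕ :=
  (Finset.range (Nat.floor x + 1)).filter Nat.Prime

/-- The finset of primes `y < p ≤ x`. -/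
def primesIoc (y x : ℝ) : Finset ℕ :=
  (primesLE x).filter (fun p => y < (p : ℝ))

/-- The exponents `c_j`: `c_0 = 0`, `c_j = e^j / (log log q)^2`. -/
def cExp (q j : ℕ) : ℝ := if j = 0 then 0 else Real.exp j / (Real.log (Real.log q)) ^ 2

/-- `P_j = q ^ (c_j)`. -/
def Pparam (q j : ℕ) : ℝ := (q : ℝ) ^ (cExp q j)

/-- `K_j = c_j ^ (-3/4)`. -/
def Kparam (q j : ℕ) : ℝ := (cExp q j) ^ (-(3 : ℝ) / 4)

/-- The Dirichlet polynomial `P_{j,x}(s, χ)`. -/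
def Ppoly (q : ℕ) (χ : DirichletCharacter ℂ q) (j : ℕ) (x : ℝ) (s : ℂ) : ℂ :=
  if j = 1 then
    (∑ p ∈ primesLE (Pparam q 1),
      χ (p : ZMod q) * (p : ℂ) ^ (-s - 1 / (Real.log x : ℂ)) *
        ((Real.log (x / p) / Real.log x : ℝ) : ℂ))
    + ∑ p ∈ primesLE (Real.log q), χ ((p : ZMod q) ^ 2) / (2 * (p : ℂ) ^ (2 * s))
  else
    ∑ p ∈ primesIoc (Pparam q (j - 1)) (Pparam q j),
      χ (p : ZMod q) * (p : ℂ) ^ (-s - 1 / (Real.log x : ℂ)) *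
        ((Real.log (x / p) / Real.log x : ℝ) : ℂ)

/-- The truncated exponential `N_{j,x}(s, χ; β)`. -/
def Npoly (q : ℕ) (χ : DirichletCharacter ℂ q) (astar : ℝ) (j : ℕ) (x : ℝ) (s : ℂ)
    (β : ℝ) : ℂ :=
  ∑ n ∈ Finset.range (Nat.floor (100 * astar ^ 2 * Kparam q j) + 1),
    (β : ℂ) ^ n * (Ppoly q χ j x s) ^ n / (n.factorial : ℂ)

/-- `N_x(s, χ; β) = ∏_{j=1}^R N_{j,x}(s, χ; β)`. -/
def NpolyFull (q : ℕ) (χ : DirichletCharacter ℂ q) (astar : ℝ) (R : ℕ) (x : ℝ) (s : ℂ)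
    (β : ℝ) : ℂ :=
  ∏ j ∈ Finset.Icc 1 R, Npoly q χ astar j x s β

/-- The conjugate Dirichlet character. -/
def conjChar {q : ℕ} (χ : DirichletCharacter ℂ q) : DirichletCharacter ℂ q :=
  χ.ringHomComp (starRingEnd ℂ)

/-- GRH for the modulus `q`: all nontrivial zeros of all Dirichlet `L`-functions mod `q`
lie on the critical line. -/
def GRHmod (q : ℕ) [NeZero q] : Prop :=
  ∀ χ : DirichletCharacter ℂ q, ∀ s : ℂ,
    0 < s.re → s.re < 1 → DirichletCharacter.LFunction χ s = 0 → s.re = 1 / 2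

/-- The number of primitive Dirichlet characters mod `q`. -/
def phiStar (q : ℕ) : ℕ := Nat.card {χ : DirichletCharacter ℂ q // χ.IsPrimitive}

/-- The set `T_k` of primitive characters with all `P_{j,P_R}(1/2 + i t_m, χ)` small. -/
def Tset (q : ℕ) (k : ℕ) (R : ℕ) (t : ℕ → ℝ) : Finset (DirichletCharacter ℂ q) :=
  Finset.univ.filter (fun χ => χ.IsPrimitive ∧
    ∀ j ∈ Finset.Icc 1 R, ∀ m ∈ Finset.Icc 1 k,
      ‖Ppoly q χ j (Pparam q R) (1 / 2 + (t m : ℂ) * I)‖ ≤ Kparam q j)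

/-!
Expanding the `k`-th power turns the inner sum into a Dirichlet polynomial supported on the
products `n = p₁ ⋯ p_k ≤ x ^ k < q`. By orthogonality of characters (Parseval on `(ZMod q)ˣ`)
its mean square over `χ` is `φ(q)` times the sum over residues of the squared coefficients.
Since `n < q`, a residue determines `n`, hence the multiset of its prime factors, so it
collects at most `k!` ordered tuples, and Cauchy–Schwarz on each residue class gives the
factor `k!`.
-/

open ComplexConjugate Finset

namespace DirichletCharacter

lemma conj_apply_eq_apply_inv {q : ℕ} {n : ZMod q} (hn : IsUnit n)
    (χ : DirichletCharacter ℂ q) : conj (χ n) = χ n⁻¹ := by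
  rw [starRingEnd_apply, MulChar.star_apply', MulChar.inv_apply, ← hn.unit_spec,
    Ring.inverse_unit, ZMod.inv_coe_unit]

variable {q : ℕ} [NeZero q]

lemma sum_apply_mul_conj_apply (m n : ZMod q) :
    ∑ χ : DirichletCharacter ℂ q, χ m * conj (χ n) =
      if IsUnit n ∧ m = n then (q.totient : ℂ) else 0 := by
  by_cases hn : IsUnit n
  · calc ∑ χ : DirichletCharacter ℂ q, χ m * conj (χ n)
        = ∑ χ : DirichletCharacter ℂ q, χ n⁻¹ * χ m :=
          sum_congr rfl fun χ _ ↦ by rw [conj_apply_eq_apply_inv hn, mul_comm]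
      _ = _ := by simp [sum_char_inv_mul_char_eq ℂ hn, hn, eq_comm]
  · simp [MulChar.map_nonunit _ hn, hn]

lemma sum_norm_sq_sum_mul_apply (c : ZMod q → ℂ) :
    ∑ χ : DirichletCharacter ℂ q, ‖∑ r, c r * χ r‖ ^ 2 =
      q.totient * ∑ r with IsUnit r, ‖c r‖ ^ 2 := by
  have hexpand (χ : DirichletCharacter ℂ q) : ((‖∑ r, c r * χ r‖ ^ 2 : ℝ) : ℂ) =
      ∑ r, ∑ s, c r * conj (c s) * (χ r * conj (χ s)) := by
    rw [Complex.ofReal_pow, ← Complex.mul_conj', map_sum, sum_mul_sum]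
    exact sum_congr rfl fun r _ ↦ sum_congr rfl fun s _ ↦ by
      rw [map_mul]; ring
  apply Complex.ofReal_injective
  rw [Complex.ofReal_sum, sum_congr rfl fun χ _ ↦ hexpand χ, sum_comm]
  simp_rw [sum_comm (s := univ (α := DirichletCharacter ℂ q)), ← mul_sum,
    sum_apply_mul_conj_apply]
  push_cast
  rw [sum_filter, mul_sum]
  refine sum_congr rfl fun r _ ↦ ?_
  simp only [and_comm (a := IsUnit _), ite_and, mul_ite, mul_zero, sum_ite_eq]
  split_ifs <;> simp [Complex.mul_conj', mul_comm]

lemma sum_norm_sq_sum_mul_apply_le {ι : Type*} (s : Finset ι) (b : ι → ℂ) (n : ι → ZMod q)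
    {M : ℕ} (hM : ∀ r, #{i ∈ s | n i = r} ≤ M) :
    ∑ χ : DirichletCharacter ℂ q, ‖∑ i ∈ s, b i * χ (n i)‖ ^ 2 ≤
      q.totient * M * ∑ i ∈ s, ‖b i‖ ^ 2 := by
  set B : ZMod q → ℂ := fun r ↦ ∑ i ∈ s with n i = r, b i
  have hfiber (χ : DirichletCharacter ℂ q) : ∑ i ∈ s, b i * χ (n i) = ∑ r, B r * χ r := by
    rw [← sum_fiberwise s n]
    refine sum_congr rfl fun r _ ↦ ?_
    rw [sum_mul]
    exact sum_congr rfl fun i hi ↦ by rw [(mem_filter.mp hi).2]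
  have hB (r : ZMod q) : ‖B r‖ ^ 2 ≤ M * ∑ i ∈ s with n i = r, ‖b i‖ ^ 2 :=
    calc ‖B r‖ ^ 2 ≤ (∑ i ∈ s with n i = r, ‖b i‖) ^ 2 := by gcongr; exact norm_sum_le _ _
      _ ≤ #{i ∈ s | n i = r} * ∑ i ∈ s with n i = r, ‖b i‖ ^ 2 := sq_sum_le_card_mul_sum_sq
      _ ≤ M * ∑ i ∈ s with n i = r, ‖b i‖ ^ 2 := by gcongr; exact hM r
  calc ∑ χ : DirichletCharacter ℂ q, ‖∑ i ∈ s, b i * χ (n i)‖ ^ 2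
      = q.totient * ∑ r with IsUnit r, ‖B r‖ ^ 2 := by
        simp_rw [hfiber]; exact sum_norm_sq_sum_mul_apply B
    _ ≤ q.totient * ∑ r, ‖B r‖ ^ 2 := by
        gcongr; exact filter_subset _ _
    _ ≤ q.totient * ∑ r, M * ∑ i ∈ s with n i = r, ‖b i‖ ^ 2 := by gcongr with r; exact hB r
    _ = q.totient * M * ∑ i ∈ s, ‖b i‖ ^ 2 := by
        rw [← mul_sum, sum_fiberwise, mul_assoc]

end DirichletCharacter

lemma card_filter_ofFn_perm_le_factorial {α : Type*} [DecidableEq α] {k : ℕ}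
    (s : Finset (Fin k → α)) (f : Fin k → α) :
    #{g ∈ s | (List.ofFn g).Perm (List.ofFn f)} ≤ k.factorial :=
  calc #{g ∈ s | (List.ofFn g).Perm (List.ofFn f)}
      ≤ (List.ofFn f).permutations.toFinset.card :=
        card_le_card_of_injOn List.ofFn
          (fun g hg ↦ by simpa [List.mem_permutations] using (mem_filter.mp hg).2)
          fun _ _ _ _ h ↦ List.ofFn_injective h
    _ ≤ (List.ofFn f).permutations.length := List.toFinset_card_le _
    _ = k.factorial := by rw [List.length_permutations, List.length_ofFn]

lemma Nat.ofFn_perm_of_prod_eq {k : ℕ} {f g : Fin k → ℕ} (hf : ∀ i, (f i).Prime)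
    (hg : ∀ i, (g i).Prime) (h : ∏ i, f i = ∏ i, g i) : (List.ofFn f).Perm (List.ofFn g) := by
  have hfactors {f : Fin k → ℕ} (hf : ∀ i, (f i).Prime) :
      (List.ofFn f).Perm (∏ i, f i).primeFactorsList :=
    Nat.primeFactorsList_unique List.prod_ofFn (by simpa [List.mem_ofFn] using hf)
  exact (hfactors hf).trans (h ▸ (hfactors hg).symm)

lemma card_filter_prod_natCast_eq_le_factorial {k q : ℕ} (s : Finset (Fin k → ℕ))
    (hprime : ∀ f ∈ s, ∀ i, (f i).Prime) (hlt : ∀ f ∈ s, ∏ i, f i < q) (r : ZMod q) :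
    #{f ∈ s | ∏ i, (f i : ZMod q) = r} ≤ k.factorial := by
  obtain hempty | ⟨f, hf⟩ := (s.filter fun f ↦ ∏ i, (f i : ZMod q) = r).eq_empty_or_nonempty
  · simp [hempty]
  obtain ⟨hfs, rfl⟩ := mem_filter.mp hf
  refine (card_le_card fun g hg ↦ ?_).trans (card_filter_ofFn_perm_le_factorial s f)
  obtain ⟨hgs, hgf⟩ := mem_filter.mp hg
  refine mem_filter.mpr ⟨hgs, Nat.ofFn_perm_of_prod_eq (hprime g hgs) (hprime f hfs) ?_⟩
  simp only [← Nat.cast_prod, ZMod.natCast_eq_natCast_iff'] at hgf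
  rwa [Nat.mod_eq_of_lt (hlt g hgs), Nat.mod_eq_of_lt (hlt f hfs)] at hgf

lemma mem_primesLE {x : ℝ} {p : ℕ} : p ∈ primesLE x ↔ p.Prime ∧ (p : ℝ) ≤ x := by
  simp only [primesLE, mem_filter, mem_range, Nat.lt_succ_iff]
  exact ⟨fun ⟨hp, hpr⟩ ↦ ⟨hpr, (Nat.le_floor_iff' hpr.ne_zero).mp hp⟩,
    fun ⟨hpr, hp⟩ ↦ ⟨(Nat.le_floor_iff' hpr.ne_zero).mpr hp, hpr⟩⟩

lemma norm_mul_natCast_cpow_neg_half_sq (z : ℂ) (p : ℕ) :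
    ‖z * (p : ℂ) ^ (-(1 / 2 : ℂ))‖ ^ 2 = ‖z‖ ^ 2 / p := by
  rcases p.eq_zero_or_pos with rfl | hp
  · simp
  rw [norm_mul, mul_pow, Complex.norm_natCast_cpow_of_pos hp,
    ← Real.rpow_mul_natCast (Nat.cast_nonneg p)]
  norm_num [Real.rpow_neg_one, div_eq_mul_inv]

lemma one_lt_log_natCast {q : ℕ} (hq : 3 ≤ q) : 1 < Real.log q := by
  rw [Real.lt_log_iff_exp_lt (by positivity)]
  calc Real.exp 1 < 3 := by linarith [Real.exp_one_lt_d9]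
    _ ≤ q := by exact_mod_cast hq

theorem mean_value_prime_dirichlet_polynomial :
    ∃ C : ℝ, 0 < C ∧
      ∀ q : ℕ, 3 ≤ q → ∀ x : ℝ, 2 ≤ x → x ≤ q →
      ∀ k : ℕ, 0 < k → x ^ (k : ℝ) ≤ (q : ℝ) / Real.log q →
      ∀ a : ℕ → ℂ,
      (∑ χ : DirichletCharacter ℂ q,
          ‖∑ p ∈ primesLE x,
              a p * χ (p : ZMod q) * (p : ℂ) ^ (-(1 / 2 : ℂ))‖ ^ (2 * k))
        ≤ C * (Nat.totient q : ℝ) * (Nat.factorial k) *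
            (∑ p ∈ primesLE x, ‖a p‖ ^ 2 / p) ^ k := by
  refine ⟨1, one_pos, fun q hq x _ _ k _ hxk a ↦ ?_⟩
  have : NeZero q := ⟨by omega⟩
  set s := Fintype.piFinset fun _ : Fin k ↦ primesLE x
  set b : (Fin k → ℕ) → ℂ := fun f ↦ ∏ i, a (f i) * (f i : ℂ) ^ (-(1 / 2 : ℂ))
  have hpow (χ : DirichletCharacter ℂ q) :
      (∑ p ∈ primesLE x, a p * χ (p : ZMod q) * (p : ℂ) ^ (-(1 / 2 : ℂ))) ^ k =
        ∑ f ∈ s, b f * χ (∏ i, (f i : ZMod q)) := by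
    rw [sum_pow']
    refine sum_congr rfl fun f _ ↦ ?_
    rw [map_prod, ← prod_mul_distrib]
    exact prod_congr rfl fun i _ ↦ mul_right_comm _ _ _
  have hprime (f) (hf : f ∈ s) (i) : (f i).Prime ∧ (f i : ℝ) ≤ x :=
    mem_primesLE.mp (Fintype.mem_piFinset.mp hf i)
  have hxq : x ^ k < q := by
    rw [← Real.rpow_natCast]
    exact hxk.trans_lt (div_lt_self (by positivity) (one_lt_log_natCast hq))
  have hlt (f) (hf : f ∈ s) : ∏ i, f i < q := by
    suffices ((∏ i, f i : ℕ) : ℝ) < q by exact_mod_cast this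
    calc ((∏ i, f i : ℕ) : ℝ) = ∏ i, (f i : ℝ) := Nat.cast_prod _ _
      _ ≤ ∏ _i : Fin k, x := prod_le_prod (fun _ _ ↦ by positivity) fun i _ ↦ (hprime f hf i).2
      _ = x ^ k := Fin.prod_const k x
      _ < q := hxq
  have hb : ∑ f ∈ s, ‖b f‖ ^ 2 = (∑ p ∈ primesLE x, ‖a p‖ ^ 2 / p) ^ k := by
    simp only [b, s, norm_prod, ← prod_pow, norm_mul_natCast_cpow_neg_half_sq, sum_pow']
  calc ∑ χ : DirichletCharacter ℂ q,
        ‖∑ p ∈ primesLE x, a p * χ (p : ZMod q) * (p : ℂ) ^ (-(1 / 2 : ℂ))‖ ^ (2 * k)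
      = ∑ χ : DirichletCharacter ℂ q, ‖∑ f ∈ s, b f * χ (∏ i, (f i : ZMod q))‖ ^ 2 := by
        simp only [pow_mul', ← norm_pow, hpow]
    _ ≤ q.totient * k.factorial * ∑ f ∈ s, ‖b f‖ ^ 2 :=
        DirichletCharacter.sum_norm_sq_sum_mul_apply_le s b _
          (card_filter_prod_natCast_eq_le_factorial s (fun f hf i ↦ (hprime f hf i).1) hlt)
    _ = 1 * q.totient * k.factorial * (∑ p ∈ primesLE x, ‖a p‖ ^ 2 / p) ^ k := by
        rw [hb, one_mul]

end
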